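/- arXiv:2602.21312 — 4 statements merged into one kernel-verified Lean document; each statement's English description precedes it below -/
import Mathlib

section
/- Every decision tree D for (H, T) has a sepcover node: there exists a node v of D such that after deleting all nodes of the root-to-v path from D, every component of the remaining forest contains at most |H|/2 leaves. -/
open Finset

universe u

inductive DTree (α : Type u) : Type u where
  | leaf : α → DTree α
  | node : Finset (Finset α) → (Finset α → DTree α) → DTree α

variable {α : Type*} [DecidableEq α]

noncomputable def DTree.cost : DTree α → α → ℕ
  | .leaf _, _ => 0
  | .node t c, h =>
      if hR : ∃ R ∈ t, h ∈ R then 1 + (c hR.choose).cost h else 0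

noncomputable def costW (H : Finset α) (D : DTree α) : ℕ := H.sup (fun h => D.cost h)

noncomputable def costA (H : Finset α) (D : DTree α) : ℕ := ∑ h ∈ H, D.cost h

def IsTest (H : Finset α) (t : Finset (Finset α)) : Prop :=
  (∀ R ∈ t, R.Nonempty) ∧ (∀ R ∈ t, ∀ R' ∈ t, R ≠ R' → Disjoint R R') ∧ t.sup id = H

def Separates (H : Finset α) (T : Finset (Finset (Finset α))) : Prop :=
  ∀ h₁ ∈ H, ∀ h₂ ∈ H, h₁ ≠ h₂ → ∃ t ∈ T, ∃ R ∈ t, h₁ ∈ R ∧ h₂ ∉ R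

def Valid (T : Finset (Finset (Finset α))) : Finset α → DTree α → Prop
  | Hv, .leaf h => Hv = {h}
  | Hv, .node t c => t ∈ T ∧ ∀ R ∈ t, (R ∩ Hv).Nonempty → Valid T (R ∩ Hv) (c R)

def PrecValid (T : Finset (Finset (Finset α)))
    (le : Finset (Finset α) → Finset (Finset α) → Prop) :
    Finset (Finset (Finset α)) → Finset α → DTree α → Prop
  | _, Hv, .leaf h => Hv = {h}
  | P, Hv, .node t c =>
      t ∈ T ∧ (∀ t' ∈ T, le t' t → t' ≠ t → t' ∈ P) ∧
      ∀ R ∈ t, (R ∩ Hv).Nonempty → PrecValid T le (insert t P) (R ∩ Hv) (c R)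

noncomputable def sumSizes : DTree α → Finset α → ℕ
  | .leaf _, _ => 0
  | .node t c, Hv =>
      Hv.card + ∑ R ∈ t.filter (fun R => (R ∩ Hv).Nonempty), sumSizes (c R) (R ∩ Hv)

noncomputable def nleaves : DTree α → Finset α → ℕ
  | .leaf _, _ => 1
  | .node t c, Hv => ∑ R ∈ t.filter (fun R => (R ∩ Hv).Nonempty), nleaves (c R) (R ∩ Hv)

def xiT (H : Finset α) (t : Finset (Finset α)) : Finset α :=
  H.filter (fun h => ∃ R ∈ t, h ∈ R ∧ 4 * R.card ≤ 3 * H.card)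

/-- `SepAt n D Hv P k` holds if, starting from the current node (with candidate set
`Hv`), there is a node `v` at depth `k` such that `P` is the set of tests labeling the
internal nodes on the path to `v` (including `v` itself if internal), and after deleting
the nodes of this path every remaining component (hanging subtree) has at most `n/2`
leaves (expressed as `2 · leaves ≤ n`). -/
inductive SepAt {α : Type*} [DecidableEq α] (n : ℕ) :
    DTree α → Finset α → Finset (Finset (Finset α)) → ℕ → Prop where
  | leaf (h : α) (Hv : Finset α) : SepAt n (.leaf h) Hv ∅ 0
  | here (t : Finset (Finset α)) (c : Finset α → DTree α) (Hv : Finset α) :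
      (∀ R ∈ t, (R ∩ Hv).Nonempty → 2 * nleaves (c R) (R ∩ Hv) ≤ n) →
      SepAt n (.node t c) Hv {t} 0
  | step (t : Finset (Finset α)) (c : Finset α → DTree α) (Hv R : Finset α)
      (P : Finset (Finset (Finset α))) (k : ℕ) :
      R ∈ t → (R ∩ Hv).Nonempty →
      (∀ Rp ∈ t, (Rp ∩ Hv).Nonempty → Rp ≠ R → 2 * nleaves (c Rp) (Rp ∩ Hv) ≤ n) →
      SepAt n (c R) (R ∩ Hv) P k →
      SepAt n (.node t c) Hv (insert t P) (k + 1)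

lemma nleaves_eq_card {α : Type*} [DecidableEq α]
    (H : Finset α) (T : Finset (Finset (Finset α)))
    (htest : ∀ t ∈ T, IsTest H t) :
    ∀ (D : DTree α) (Hv : Finset α), Hv ⊆ H → Valid T Hv D →
      nleaves D Hv = Hv.card := by
  intro D
  induction D with
  | leaf h =>
      intro Hv _ hval
      simp [Valid] at hval
      simp [nleaves, hval]
  | node t c ih =>
      intro Hv hHv hval
      obtain ⟨ht, hch⟩ := hval
      obtain ⟨hne, hdisj, hsup⟩ := htest t ht
      have hcover : Hv = t.biUnion (fun R => R ∩ Hv) := by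
        apply Finset.Subset.antisymm
        · intro x hx
          have hxH : x ∈ H := hHv hx
          rw [← hsup, Finset.mem_sup] at hxH
          obtain ⟨R, hR, hxR⟩ := hxH
          exact Finset.mem_biUnion.2 ⟨R, hR, Finset.mem_inter.2 ⟨hxR, hx⟩⟩
        · intro x hx
          obtain ⟨R, _, hxR⟩ := Finset.mem_biUnion.1 hx
          exact (Finset.mem_inter.1 hxR).2
      have hcard : Hv.card = ∑ R ∈ t, (R ∩ Hv).card := by
        conv_lhs => rw [hcover]
        apply Finset.card_biUnion
        intro R hR R' hR' hRR'
        exact Finset.disjoint_of_subset_left (Finset.inter_subset_left)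
          (Finset.disjoint_of_subset_right (Finset.inter_subset_left)
            (hdisj R hR R' hR' hRR'))
      rw [hcard]
      show ∑ R ∈ t.filter (fun R => (R ∩ Hv).Nonempty), nleaves (c R) (R ∩ Hv)
        = ∑ R ∈ t, (R ∩ Hv).card
      rw [Finset.sum_filter]
      apply Finset.sum_congr rfl
      intro R hR
      by_cases hneR : (R ∩ Hv).Nonempty
      · rw [if_pos hneR, ih R (R ∩ Hv)
          ((Finset.inter_subset_right).trans hHv) (hch R hR hneR)]
      · rw [if_neg hneR, eq_comm, Finset.card_eq_zero,
          ← Finset.not_nonempty_iff_eq_empty]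
        exact hneR

lemma sepAt_aux {α : Type*} [DecidableEq α]
    (H : Finset α) (T : Finset (Finset (Finset α)))
    (htest : ∀ t ∈ T, IsTest H t) :
    ∀ (D : DTree α) (Hv : Finset α), Hv ⊆ H → Valid T Hv D →
      ∃ (P : Finset (Finset (Finset α))) (k : ℕ), SepAt H.card D Hv P k := by
  intro D
  induction D with
  | leaf h =>
      intro Hv _ _
      exact ⟨∅, 0, SepAt.leaf h Hv⟩
  | node t c ih =>
      intro Hv hHv hval
      obtain ⟨ht, hch⟩ := hval
      obtain ⟨hne, hdisj, hsup⟩ := htest t ht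
      by_cases hheavy : ∃ R ∈ t, (R ∩ Hv).Nonempty ∧
          H.card < 2 * nleaves (c R) (R ∩ Hv)
      · obtain ⟨R, hR, hRne, hRbig⟩ := hheavy
        have hsubR : R ∩ Hv ⊆ H := (Finset.inter_subset_right).trans hHv
        obtain ⟨P, k, hs⟩ := ih R (R ∩ Hv) hsubR (hch R hR hRne)
        refine ⟨insert t P, k + 1, SepAt.step t c Hv R P k hR hRne ?_ hs⟩
        intro Rp hRp hRpne hRpR
        have h1 : nleaves (c Rp) (Rp ∩ Hv) = (Rp ∩ Hv).card :=
          nleaves_eq_card H T htest (c Rp) (Rp ∩ Hv)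
            ((Finset.inter_subset_right).trans hHv) (hch Rp hRp hRpne)
        have h2 : nleaves (c R) (R ∩ Hv) = (R ∩ Hv).card :=
          nleaves_eq_card H T htest (c R) (R ∩ Hv) hsubR (hch R hR hRne)
        have hdj : Disjoint (Rp ∩ Hv) (R ∩ Hv) :=
          Finset.disjoint_of_subset_left (Finset.inter_subset_left)
            (Finset.disjoint_of_subset_right (Finset.inter_subset_left)
              (hdisj Rp hRp R hR hRpR))
        have hsum : (Rp ∩ Hv).card + (R ∩ Hv).card ≤ H.card := by
          rw [← Finset.card_union_of_disjoint hdj]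
          exact Finset.card_le_card (Finset.union_subset
            ((Finset.inter_subset_right).trans hHv) hsubR)
        rw [h1]; rw [h2] at hRbig; omega
      · push_neg at hheavy
        exact ⟨{t}, 0, SepAt.here t c Hv fun R hR hRne => hheavy R hR hRne⟩

/-- every decision tree has a sepcover node. -/
theorem stmt13 {α : Type*} [DecidableEq α]
    (H : Finset α) (T : Finset (Finset (Finset α)))
    (htest : ∀ t ∈ T, IsTest H t)
    (hsep : Separates H T)
    (D : DTree α) (hD : Valid T H D) :
    ∃ (P : Finset (Finset (Finset α))) (k : ℕ), SepAt H.card D H P k := by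
  exact sepAt_aux H T htest D H (Finset.Subset.refl H) hD
end

section
/- Let ≼ be a partial order on T and suppose a precedence-closed decision tree for (H, T, ≼) exists. Then there exists a set P ⊆ T of tests that is precedence-closed in (T, ≼) (i.e., downward closed), satisfies |⋃_{t∈P} ξ(t)| ≥ |U|/4, and has |P| ≤ OPT, where OPT is the minimum of COST_W(D) over precedence-closed decision trees D for (H, T, ≼). In particular, the optimal value of the induced Precedence Constrained Set Cover instance (U, ξ(T), ≼, f = 1/4) is at most the optimal worst-case cost of the Precedence Constrained Worst Case Decision Tree instance (H, T, ≼). -/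
open Finset

universe u

variable {α : Type*} [DecidableEq α]

lemma key_lemma (H : Finset α) (T : Finset (Finset (Finset α)))
    (htest : ∀ t ∈ T, IsTest H t)
    (le : Finset (Finset α) → Finset (Finset α) → Prop)
    (D : DTree α) :
    ∀ P0 Hv, PrecValid T le P0 Hv D → Hv ⊆ H → Hv.Nonempty →
    ∃ P1 h, h ∈ Hv ∧ P0 ⊆ P1 ∧ P1 ⊆ P0 ∪ T ∧
      (∀ s ∈ P1, s ∉ P0 → ∀ t' ∈ T, le t' s → t' ∈ P1) ∧
      Hv \ {h} ⊆ P1.sup (xiT H) ∧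
      (P1 \ P0).card ≤ D.cost h := by
  induction D with
  | leaf a =>
    intro P0 Hv hval hsub hne
    refine ⟨P0, a, ?_, subset_rfl, subset_union_left, ?_, ?_, ?_⟩
    · simp [PrecValid] at hval; simp [hval]
    · intro s hs hns; exact absurd hs hns
    · simp [PrecValid] at hval; simp [hval]
    · simp [DTree.cost]
  | node t c ih =>
    intro P0 Hv hval hsub hne
    obtain ⟨htT, hprec, hchild⟩ := hval
    obtain ⟨hrne, hdisj, hsupid⟩ := htest t htT
    have hmemrep : ∀ x ∈ Hv, ∃ R ∈ t, x ∈ R := by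
      intro x hx
      have : x ∈ t.sup id := hsupid ▸ hsub hx
      simpa using Finset.mem_sup.mp this
    by_cases hbig : ∃ R ∈ t, (R ∩ Hv).Nonempty ∧ 3 * H.card < 4 * R.card
    · obtain ⟨R, hRt, hRHv, hRbig⟩ := hbig
      obtain ⟨P1, h, hh, hsub1, hsubT, hclos, hcov, hcard⟩ :=
        ih R (insert t P0) (R ∩ Hv) (hchild R hRt hRHv)
          ((inter_subset_right).trans hsub) hRHv
      have htP1 : t ∈ P1 := hsub1 (mem_insert_self _ _)
      have hhR : h ∈ R := (mem_inter.mp hh).1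
      have hhHv : h ∈ Hv := (mem_inter.mp hh).2
      refine ⟨P1, h, hhHv, (subset_insert _ _).trans hsub1, ?_, ?_, ?_, ?_⟩
      · intro x hx
        rcases mem_union.mp (hsubT hx) with hx' | hx'
        · rcases mem_insert.mp hx' with rfl | hx'
          · exact mem_union_right _ htT
          · exact mem_union_left _ hx'
        · exact mem_union_right _ hx'
      · intro s hs hns t' ht' hle
        by_cases hst : s = t
        · by_cases htt : t' = t
          · exact htt ▸ htP1
          · exact hsub1 (mem_insert_of_mem (hprec t' ht' (hst ▸ hle) htt))
        · exact hclos s hs (fun hmem => (mem_insert.mp hmem).elim hst hns) t' ht' hle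
      · intro x hx
        obtain ⟨hxHv, hxh⟩ := mem_sdiff.mp hx
        by_cases hxR : x ∈ R
        · exact hcov (mem_sdiff.mpr ⟨mem_inter.mpr ⟨hxR, hxHv⟩, hxh⟩)
        · -- x in a small reply of t
          obtain ⟨R', hR't, hxR'⟩ := hmemrep x hxHv
          have hR'ne : R' ≠ R := fun e => hxR (e ▸ hxR')
          have hdis : Disjoint R R' := hdisj R hRt R' hR't (fun e => hR'ne e.symm)
          have hRH : R ⊆ H := hsupid ▸ (Finset.le_sup (f := id) hRt)
          have hR'H : R' ⊆ H := hsupid ▸ (Finset.le_sup (f := id) hR't)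
          have hcards : R.card + R'.card ≤ H.card := by
            rw [← Finset.card_union_of_disjoint hdis]
            exact Finset.card_le_card (union_subset hRH hR'H)
          have hsmall : 4 * R'.card ≤ 3 * H.card := by omega
          have : x ∈ xiT H t := by
            rw [xiT, mem_filter]
            exact ⟨hsub hxHv, R', hR't, hxR', hsmall⟩
          exact Finset.le_sup (f := xiT H) htP1 this
      · have hEx : ∃ R ∈ t, h ∈ R := ⟨R, hRt, hhR⟩
        have hch : hEx.choose = R := by
          obtain ⟨h1, h2⟩ := hEx.choose_spec
          by_contra hne'
          exact Finset.disjoint_left.mp (hdisj _ h1 R hRt hne') h2 hhR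
        have hcost : (DTree.node t c).cost h = 1 + (c R).cost h := by
          rw [DTree.cost, dif_pos hEx, hch]
        rw [hcost]
        have hsubset : P1 \ P0 ⊆ insert t (P1 \ insert t P0) := by
          intro x hx
          obtain ⟨hx1, hx2⟩ := mem_sdiff.mp hx
          by_cases hxt : x = t
          · exact mem_insert.mpr (Or.inl hxt)
          · exact mem_insert_of_mem (mem_sdiff.mpr ⟨hx1, by simp [mem_insert, hxt, hx2]⟩)
        calc (P1 \ P0).card ≤ (insert t (P1 \ insert t P0)).card := Finset.card_le_card hsubset
          _ ≤ (P1 \ insert t P0).card + 1 := Finset.card_insert_le _ _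
          _ ≤ (c R).cost h + 1 := by omega
          _ = 1 + (c R).cost h := by omega
    · push_neg at hbig
      obtain ⟨h, hh⟩ := hne
      refine ⟨insert t P0, h, hh, subset_insert _ _, ?_, ?_, ?_, ?_⟩
      · intro x hx
        rcases mem_insert.mp hx with rfl | hx'
        · exact mem_union_right _ htT
        · exact mem_union_left _ hx'
      · intro s hs hns t' ht' hle
        have hst : s = t := (mem_insert.mp hs).resolve_right (fun h' => hns h')
        by_cases htt : t' = t
        · exact htt ▸ mem_insert_self _ _
        · exact mem_insert_of_mem (hprec t' ht' (hst ▸ hle) htt)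
      · intro x hx
        have hxHv : x ∈ Hv := (mem_sdiff.mp hx).1
        obtain ⟨R, hRt, hxR⟩ := hmemrep x hxHv
        have hsmall : 4 * R.card ≤ 3 * H.card := hbig R hRt ⟨x, mem_inter.mpr ⟨hxR, hxHv⟩⟩
        have : x ∈ xiT H t := by
          rw [xiT, mem_filter]
          exact ⟨hsub hxHv, R, hRt, hxR, hsmall⟩
        exact Finset.le_sup (f := xiT H) (mem_insert_self _ _) this
      · have hEx : ∃ R ∈ t, h ∈ R := hmemrep h hh
        have hcost : (DTree.node t c).cost h = 1 + (c hEx.choose).cost h := by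
          rw [DTree.cost, dif_pos hEx]
        have : insert t P0 \ P0 ⊆ {t} := by
          intro x hx
          obtain ⟨hx1, hx2⟩ := mem_sdiff.mp hx
          rcases mem_insert.mp hx1 with rfl | h'
          · exact mem_singleton_self _
          · exact absurd h' hx2
        calc (insert t P0 \ P0).card ≤ ({t} : Finset _).card := Finset.card_le_card this
          _ = 1 := card_singleton _
          _ ≤ (DTree.node t c).cost h := by rw [hcost]; omega

/-- there is a downward-closed set P of tests covering at least |U|/4
whose size is at most the optimal worst-case cost of a precedence-closed decision
tree; i.e. OPT of the induced PCSC instance (f = 1/4) is at most OPT of PCWCDT. -/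
theorem stmt15 {α : Type*} [DecidableEq α]
    (H : Finset α) (hH : 2 ≤ H.card)
    (T : Finset (Finset (Finset α)))
    (htest : ∀ t ∈ T, IsTest H t)
    (hsep : Separates H T)
    (le : Finset (Finset α) → Finset (Finset α) → Prop)
    (hrefl : ∀ t ∈ T, le t t)
    (htrans : ∀ t₁ ∈ T, ∀ t₂ ∈ T, ∀ t₃ ∈ T, le t₁ t₂ → le t₂ t₃ → le t₁ t₃)
    (hanti : ∀ t₁ ∈ T, ∀ t₂ ∈ T, le t₁ t₂ → le t₂ t₁ → t₁ = t₂)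
    (hex : ∃ D : DTree α, PrecValid T le ∅ H D) :
    ∃ P ⊆ T, (∀ t ∈ P, ∀ t' ∈ T, le t' t → t' ∈ P) ∧
      (T.sup (xiT H)).card ≤ 4 * (P.sup (xiT H)).card ∧
      ∀ D : DTree α, PrecValid T le ∅ H D → P.card ≤ costW H D := by
  classical
  obtain ⟨D0, hD0⟩ := hex
  have hp : ∃ n, ∃ D : DTree α, PrecValid T le ∅ H D ∧ costW H D = n := ⟨_, D0, hD0, rfl⟩
  obtain ⟨D1, hD1, hD1e⟩ := Nat.find_spec hp
  have hmin : ∀ D : DTree α, PrecValid T le ∅ H D → costW H D1 ≤ costW H D := by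
    intro D hD
    rw [hD1e]
    exact Nat.find_min' hp ⟨D, hD, rfl⟩
  have hHne : H.Nonempty := Finset.card_pos.mp (by omega)
  obtain ⟨P1, h, hh, -, hsubT, hclos, hcov, hcard⟩ :=
    key_lemma H T htest le D1 ∅ H hD1 subset_rfl hHne
  have hPT : P1 ⊆ T := by intro x hx; simpa using hsubT hx
  refine ⟨P1, hPT, ?_, ?_, ?_⟩
  · intro s hs t' ht' hle'
    exact hclos s hs (notMem_empty s) t' ht' hle'
  · have h1 : (H \ {h}).card ≤ (P1.sup (xiT H)).card := Finset.card_le_card hcov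
    have h2 : (H \ {h}).card = H.card - 1 := by
      rw [Finset.card_sdiff_of_subset (singleton_subset_iff.mpr hh)]; simp
    have h3 : (T.sup (xiT H)).card ≤ H.card := by
      apply Finset.card_le_card
      intro x hx
      obtain ⟨t, ht, hxt⟩ := Finset.mem_sup.mp hx
      exact (mem_filter.mp hxt).1
    omega
  · intro D hD
    have hc : P1.card ≤ costW H D1 := by
      rw [Finset.sdiff_empty] at hcard
      exact hcard.trans (Finset.le_sup (f := fun h => D1.cost h) hh)
    exact hc.trans (hmin D hD)
end

section
/- Let ≼ be a partial order on T and suppose a precedence-closed decision tree for (H, T, ≼) exists. Then min{covT(P) : P a precedence-closed sequence of distinct tests from T with |⋃_{t in P} ξ(t)| ≥ |U|/4} ≤ OPT_A, where OPT_A is the minimum of COST_A(D) over precedence-closed decision trees D for (H, T, ≼). In particular, the optimal value of the induced Precedence Constrained Min-Sum Set Cover instance (U, ξ(T), ≼, f = 1/4) is at most the optimal average-case cost of the Precedence Constrained Average Case Decision Tree instance (H, T, ≼). -/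
open Finset

universe u

variable {α : Type*} [DecidableEq α]

/-- Coverage time of  in the sequence  with respect to the covering map :
the (1-based) index of the first element of  covering , or |L| if none does. -/
def listCovTime {α β : Type*} [DecidableEq α] (f : β → Finset α) (L : List β) (u : α) : ℕ :=
  match L.findIdx? (fun b => decide (u ∈ f b)) with
  | some i => i + 1
  | none => L.length

/-- A sequence is precedence-closed: every strict predecessor of an entry occurs
at an earlier position. -/
def PrecSeq {β : Type*} (T : Finset β) (le : β → β → Prop) (L : List β) : Prop :=
  ∀ (i : ℕ) (hi : i < L.length), ∀ t' ∈ T, le t' (L.get ⟨i, hi⟩) → t' ≠ L.get ⟨i, hi⟩ →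
    ∃ j, j < i ∧ ∃ hj : j < L.length, L.get ⟨j, hj⟩ = t'

/-!
Follow the path of `D` that always takes the reply containing the most current candidates, for as
long as these exceed `3|H|/4`. At each test on this path every other current candidate lies in a
reply of size at most `3|H|/4`, so it is covered by that test, no later than `D` isolates it; the
candidates left at the end of the path are at most `3|H|/4`, so the path covers at least
`|H|/4 ≥ |U|/4` elements.
-/

section PrecExtension

variable {β : Type*} [DecidableEq β]

def IsPrecExtension (T : Finset β) (le : β → β → Prop) : Finset β → List β → Prop
  | _, [] => True
  | P, t :: L => t ∈ T ∧ t ∉ P ∧ (∀ t' ∈ T, le t' t → t' ≠ t → t' ∈ P) ∧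
      IsPrecExtension T le (insert t P) L

variable {T : Finset β} {le : β → β → Prop}

theorem IsPrecExtension.mem_of_mem :
    ∀ {P : Finset β} {L : List β}, IsPrecExtension T le P L → ∀ t ∈ L, t ∈ T
  | _, [], _ => by simp
  | _, _ :: _, ⟨htT, _, _, hL⟩ => by
    simpa only [List.forall_mem_cons] using ⟨htT, hL.mem_of_mem⟩

theorem IsPrecExtension.nodup_and_notMem :
    ∀ {P : Finset β} {L : List β}, IsPrecExtension T le P L → L.Nodup ∧ ∀ t ∈ L, t ∉ P
  | _, [], _ => by simp
  | _, t :: _, ⟨_, htP, _, hL⟩ => by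
    obtain ⟨hnodup, hfresh⟩ := hL.nodup_and_notMem
    refine ⟨List.nodup_cons.2 ⟨fun ht => hfresh t ht (mem_insert_self t _), hnodup⟩, ?_⟩
    simp only [List.forall_mem_cons]
    exact ⟨htP, fun t' ht' htP' => hfresh t' ht' (mem_insert_of_mem htP')⟩

theorem IsPrecExtension.exists_earlier :
    ∀ {P : Finset β} {L : List β}, IsPrecExtension T le P L → ∀ (i : ℕ) (hi : i < L.length),
      ∀ t' ∈ T, le t' (L.get ⟨i, hi⟩) → t' ≠ L.get ⟨i, hi⟩ →
        t' ∈ P ∨ ∃ j, j < i ∧ ∃ hj : j < L.length, L.get ⟨j, hj⟩ = t'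
  | _, [], _, i, hi => absurd hi (Nat.not_lt_zero i)
  | _, _ :: _, ⟨_, _, hpred, _⟩, 0, _ => fun t' ht' hle hne => .inl (hpred t' ht' hle hne)
  | _, _ :: L, ⟨_, _, _, hL⟩, i + 1, hi => fun t' ht' hle hne => by
    rcases hL.exists_earlier i (Nat.lt_of_succ_lt_succ hi) t' ht' hle hne with
      h | ⟨j, hji, hj, rfl⟩
    · rcases mem_insert.1 h with rfl | h
      · exact .inr ⟨0, i.succ_pos, Nat.succ_pos _, rfl⟩
      · exact .inl h
    · exact .inr ⟨j + 1, Nat.succ_lt_succ hji, Nat.succ_lt_succ hj, rfl⟩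

theorem IsPrecExtension.precSeq {L : List β} (hL : IsPrecExtension T le ∅ L) :
    PrecSeq T le L := fun i hi t' ht' hle hne =>
  (hL.exists_earlier i hi t' ht' hle hne).resolve_left (notMem_empty t')

end PrecExtension

section CovTime

variable {β : Type*} (f : β → Finset α) (b : β) (L : List β) {u : α}

@[simp]
theorem listCovTime_nil : listCovTime f ([] : List β) u = 0 := rfl

theorem listCovTime_cons_of_mem (h : u ∈ f b) : listCovTime f (b :: L) u = 1 := by
  simp [listCovTime, List.findIdx?_cons, h]

theorem listCovTime_cons_of_notMem (h : u ∉ f b) :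
    listCovTime f (b :: L) u = 1 + listCovTime f L u := by
  unfold listCovTime
  rw [List.findIdx?_cons, if_neg (by simpa using h)]
  cases List.findIdx? (fun b => decide (u ∈ f b)) L <;> simp [Nat.add_comm]

theorem sdiff_sup_cons_subset [DecidableEq β] {Hv S : Finset α} (h : Hv \ S ⊆ f b) :
    Hv \ (b :: L).toFinset.sup f ⊆ (S ∩ Hv) \ L.toFinset.sup f := by
  intro u hu
  rw [List.toFinset_cons, sup_insert, sup_eq_union, mem_sdiff, mem_union, not_or] at hu
  obtain ⟨huHv, hub, huL⟩ := hu
  have huS : u ∈ S := by_contra fun huS => hub (h (mem_sdiff.2 ⟨huHv, huS⟩))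
  exact mem_sdiff.2 ⟨mem_inter.2 ⟨huS, huHv⟩, huL⟩

end CovTime

section Tests

variable {H : Finset α} {t : Finset (Finset α)}

theorem IsTest.exists_mem (ht : IsTest H t) {u : α} (hu : u ∈ H) : ∃ R ∈ t, u ∈ R := by
  rw [← ht.2.2] at hu
  simpa using mem_sup.1 hu

theorem IsTest.subset (ht : IsTest H t) {R : Finset α} (hR : R ∈ t) : R ⊆ H :=
  ht.2.2 ▸ le_sup (f := id) hR

theorem DTree.cost_node_of_mem (ht : IsTest H t) (c : Finset α → DTree α) {R : Finset α}
    (hR : R ∈ t) {u : α} (hu : u ∈ R) : (DTree.node t c).cost u = 1 + (c R).cost u := by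
  have hex : ∃ R ∈ t, u ∈ R := ⟨R, hR, hu⟩
  have hchoose : hex.choose = R := by
    by_contra hne
    exact disjoint_left.1 (ht.2.1 _ hex.choose_spec.1 R hR hne) hex.choose_spec.2 hu
  rw [DTree.cost, dif_pos hex, hchoose]

/-- `R` meets at most half of the large set `Hv` and misses the rest of it, so
`|R| ≤ |H| - |Hv| / 2 < 5 |H| / 8`. -/
theorem four_mul_card_le_of_card_inter_le {Hv R S : Finset α} (hHv : Hv ⊆ H) (hR : R ⊆ H)
    (hRS : Disjoint R S) (hle : (R ∩ Hv).card ≤ (S ∩ Hv).card)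
    (hbig : 3 * H.card < 4 * Hv.card) : 4 * R.card ≤ 3 * H.card := by
  have hunion : (R ∪ Hv).card ≤ H.card := card_le_card (union_subset hR hHv)
  have hhalves : (R ∩ Hv).card + (S ∩ Hv).card ≤ Hv.card := by
    rw [← card_union_of_disjoint (hRS.mono inter_subset_left inter_subset_left)]
    exact card_le_card (union_subset inter_subset_right inter_subset_right)
  have := card_inter_add_card_union R Hv
  omega

theorem IsTest.exists_heavy_reply (ht : IsTest H t) {Hv : Finset α} (hHv : Hv ⊆ H)
    (hbig : 3 * H.card < 4 * Hv.card) :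
    ∃ S ∈ t, (S ∩ Hv).Nonempty ∧ Hv \ S ⊆ xiT H t := by
  obtain ⟨v, hv⟩ : Hv.Nonempty := card_pos.1 (by omega)
  obtain ⟨Rv, hRv, hvRv⟩ := ht.exists_mem (hHv hv)
  obtain ⟨S, hS, hmax⟩ := exists_max_image t (fun R => (R ∩ Hv).card) ⟨Rv, hRv⟩
  refine ⟨S, hS, card_pos.1 ?_, fun u hu => ?_⟩
  · exact lt_of_lt_of_le (card_pos.2 ⟨v, mem_inter.2 ⟨hvRv, hv⟩⟩) (hmax Rv hRv)
  obtain ⟨huHv, huS⟩ := mem_sdiff.1 hu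
  obtain ⟨R, hR, huR⟩ := ht.exists_mem (hHv huHv)
  have hRS : R ≠ S := by rintro rfl; exact huS huR
  exact mem_filter.2 ⟨hHv huHv, R, hR, huR,
    four_mul_card_le_of_card_inter_le hHv (ht.subset hR) (ht.2.1 R hR S hS hRS) (hmax R hR) hbig⟩

end Tests

section HeavyPath

variable {H : Finset α} {T : Finset (Finset (Finset α))}
  {le : Finset (Finset α) → Finset (Finset α) → Prop}

/-- The candidate set `Hv` lies inside one reply of every test in `P`, so repeating such a
test on the path sends all of `Hv` to that reply. -/
theorem exists_heavy_path_cover (hH : 2 ≤ H.card) (htest : ∀ t ∈ T, IsTest H t) :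
    ∀ (D : DTree α) (P : Finset (Finset (Finset α))) (Hv : Finset α), PrecValid T le P Hv D →
      Hv ⊆ H → (∀ t ∈ P, ∃ R ∈ t, Hv ⊆ R) →
      ∃ L, IsPrecExtension T le P L ∧ 4 * (Hv \ L.toFinset.sup (xiT H)).card ≤ 3 * H.card ∧
        ∀ u ∈ Hv, listCovTime (xiT H) L u ≤ D.cost u := by
  intro D
  induction D with
  | leaf h =>
    intro P Hv hD _ _
    have hsmall : 4 * Hv.card ≤ 3 * H.card := by
      rw [show Hv = {h} from hD, card_singleton]
      omega
    exact ⟨[], trivial, by simpa using hsmall, fun u _ => by simp⟩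
  | node t c ih =>
    intro P Hv hD hHv hP
    obtain ⟨htT, hpred, hchild⟩ := hD
    by_cases hsmall : 4 * Hv.card ≤ 3 * H.card
    · exact ⟨[], trivial, by simpa using hsmall, fun u _ => by simp⟩
    have ht := htest t htT
    by_cases htP : t ∈ P
    · obtain ⟨R, hR, hHvR⟩ := hP t htP
      have hRHv : R ∩ Hv = Hv := inter_eq_right.2 hHvR
      have hchildR := hchild R hR (by rw [hRHv]; exact card_pos.1 (by omega))
      rw [hRHv, insert_eq_of_mem htP] at hchildR
      obtain ⟨L, hL, hcover, hcost⟩ := ih R P Hv hchildR hHv hP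
      refine ⟨L, hL, hcover, fun u hu => ?_⟩
      rw [DTree.cost_node_of_mem ht c hR (hHvR hu)]
      exact (hcost u hu).trans (Nat.le_add_left _ 1)
    obtain ⟨S, hS, hSne, hHvS⟩ := ht.exists_heavy_reply hHv (by omega)
    have hP' : ∀ t' ∈ insert t P, ∃ R ∈ t', S ∩ Hv ⊆ R := by
      intro t' ht'
      rcases mem_insert.1 ht' with rfl | ht'
      · exact ⟨S, hS, inter_subset_left⟩
      · obtain ⟨R, hR, hHvR⟩ := hP t' ht'
        exact ⟨R, hR, inter_subset_right.trans hHvR⟩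
    obtain ⟨L, hL, hcover, hcost⟩ :=
      ih S (insert t P) (S ∩ Hv) (hchild S hS hSne) (inter_subset_right.trans hHv) hP'
    refine ⟨t :: L, ⟨htT, htP, hpred, hL⟩,
      (Nat.mul_le_mul_left 4 (card_le_card (sdiff_sup_cons_subset _ _ _ hHvS))).trans hcover,
      fun u hu => ?_⟩
    by_cases huxi : u ∈ xiT H t
    · obtain ⟨R, hR, huR⟩ := ht.exists_mem (hHv hu)
      rw [listCovTime_cons_of_mem _ _ _ huxi, DTree.cost_node_of_mem ht c hR huR]
      exact Nat.le_add_right 1 _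
    · have huS : u ∈ S := by_contra fun huS => huxi (hHvS (mem_sdiff.2 ⟨hu, huS⟩))
      rw [listCovTime_cons_of_notMem _ _ _ huxi, DTree.cost_node_of_mem ht c hS huS]
      exact Nat.add_le_add_left (hcost u (mem_inter.2 ⟨huS, hu⟩)) 1

end HeavyPath

theorem stmt16_general {α : Type*} [DecidableEq α]
    (H : Finset α) (hH : 2 ≤ H.card)
    (T : Finset (Finset (Finset α)))
    (htest : ∀ t ∈ T, IsTest H t)
    (le : Finset (Finset α) → Finset (Finset α) → Prop) :
    ∀ D : DTree α, PrecValid T le ∅ H D →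
      ∃ L : List (Finset (Finset α)),
        (∀ t ∈ L, t ∈ T) ∧ L.Nodup ∧ PrecSeq T le L ∧
        (T.sup (xiT H)).card ≤ 4 * (L.toFinset.sup (xiT H)).card ∧
        (∑ u ∈ T.sup (xiT H), listCovTime (xiT H) L u) ≤ costA H D := by
  intro D hD
  obtain ⟨L, hL, hcover, hcost⟩ :=
    exists_heavy_path_cover hH htest D ∅ H hD subset_rfl (by simp)
  have hU : T.sup (xiT H) ⊆ H := Finset.sup_le fun t _ => filter_subset _ _
  refine ⟨L, hL.mem_of_mem, hL.nodup_and_notMem.1, hL.precSeq, ?_, ?_⟩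
  · have := card_le_card hU
    have := card_le_card_sdiff_add_card (s := H) (t := L.toFinset.sup (xiT H))
    omega
  · calc ∑ u ∈ T.sup (xiT H), listCovTime (xiT H) L u
        ≤ ∑ u ∈ T.sup (xiT H), D.cost u := sum_le_sum fun u hu => hcost u (hU hu)
      _ ≤ ∑ u ∈ H, D.cost u := sum_le_sum_of_subset hU

/-- the optimal value of the induced PCMSSC instance (f = 1/4) is at
most the optimal average-case cost of a precedence-closed decision tree. -/
theorem stmt16 {α : Type*} [DecidableEq α]
    (H : Finset α) (hH : 2 ≤ H.card)
    (T : Finset (Finset (Finset α)))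
    (htest : ∀ t ∈ T, IsTest H t)
    (hsep : Separates H T)
    (le : Finset (Finset α) → Finset (Finset α) → Prop)
    (hrefl : ∀ t ∈ T, le t t)
    (htrans : ∀ t₁ ∈ T, ∀ t₂ ∈ T, ∀ t₃ ∈ T, le t₁ t₂ → le t₂ t₃ → le t₁ t₃)
    (hanti : ∀ t₁ ∈ T, ∀ t₂ ∈ T, le t₁ t₂ → le t₂ t₁ → t₁ = t₂) :
    ∀ D : DTree α, PrecValid T le ∅ H D →
      ∃ L : List (Finset (Finset α)),
        (∀ t ∈ L, t ∈ T) ∧ L.Nodup ∧ PrecSeq T le L ∧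
        (T.sup (xiT H)).card ≤ 4 * (L.toFinset.sup (xiT H)).card ∧
        (∑ u ∈ T.sup (xiT H), listCovTime (xiT H) L u) ≤ costA H D :=
  stmt16_general H hH T htest le
end

section
/- The minimum worst-case cost of a precedence-closed decision tree for the constructed instance (H, T, ≼_T) equals the minimum size of a precedence-closed subfamily C ⊆ S with ⋃_{X∈C} X = U. (This is the correctness of the reduction showing that approximating Precedence Constrained Worst Case Decision Tree is as hard as approximating Precedence Constrained Set Cover with f = 1.) -/
open Finset

universe u

variable {α : Type*} [DecidableEq α]

/-- The test associated to a set X in the reduction: singleton replies for the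
hypotheses of elements of X, plus (if nonempty) one reply collecting all hypotheses
of elements outside X. -/
def tX {α : Type*} [DecidableEq α] (U X : Finset α) : Finset (Finset (α × Bool)) :=
  ((X ×ˢ (Finset.univ : Finset Bool)).image (fun p => ({p} : Finset (α × Bool)))) ∪
    (({(U \ X) ×ˢ (Finset.univ : Finset Bool)} : Finset (Finset (α × Bool))).filter
      (fun R => R.Nonempty))

/-- The partial order on the constructed tests induced by the order on the sets. -/
def liftLe {α : Type*} [DecidableEq α] (U : Finset α) (S : Finset (Finset α))
    (le : Finset α → Finset α → Prop) :
    Finset (Finset (α × Bool)) → Finset (Finset (α × Bool)) → Prop :=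
  fun t₁ t₂ => ∃ X ∈ S, ∃ Y ∈ S, tX U X = t₁ ∧ tX U Y = t₂ ∧ le X Y


section Helpers
variable {α : Type*} [DecidableEq α]

set_option linter.unusedSectionVars false

lemma prodB_inter (A B : Finset α) :
    (A ×ˢ (Finset.univ : Finset Bool)) ∩ (B ×ˢ (Finset.univ : Finset Bool))
      = (A ∩ B) ×ˢ (Finset.univ : Finset Bool) := by
  ext ⟨u, b⟩; simp [Finset.mem_product, and_assoc]

lemma mem_prodB {A : Finset α} {u : α} {b : Bool} :
    (u, b) ∈ A ×ˢ (Finset.univ : Finset Bool) ↔ u ∈ A := by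
  simp [Finset.mem_product]

lemma mem_tX {U X : Finset α} {R : Finset (α × Bool)} :
    R ∈ tX U X ↔ (∃ p ∈ X ×ˢ (Finset.univ : Finset Bool), R = ({p} : Finset (α × Bool)))
      ∨ (R = (U \ X) ×ˢ (Finset.univ : Finset Bool) ∧ R.Nonempty) := by
  simp only [tX, Finset.mem_union, Finset.mem_image, Finset.mem_filter, Finset.mem_singleton]
  constructor
  · rintro (⟨p, hp, rfl⟩ | ⟨rfl, hne⟩)
    · exact Or.inl ⟨p, hp, rfl⟩
    · exact Or.inr ⟨rfl, hne⟩
  · rintro (⟨p, hp, rfl⟩ | ⟨rfl, hne⟩)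
    · exact Or.inl ⟨p, hp, rfl⟩
    · exact Or.inr ⟨rfl, hne⟩

lemma singleton_mem_tX {U X : Finset α} {u : α} {b : Bool} :
    ({(u, b)} : Finset (α × Bool)) ∈ tX U X ↔ u ∈ X := by
  rw [mem_tX]
  constructor
  · rintro (⟨p, hp, hpe⟩ | ⟨h1, h2⟩)
    · have : p = (u, b) := Finset.mem_singleton.1 (hpe ▸ Finset.mem_singleton_self p)
      subst this; exact mem_prodB.1 hp
    · exfalso
      have hu : (u, b) ∈ (U \ X) ×ˢ (Finset.univ : Finset Bool) := by
        rw [← h1]; exact Finset.mem_singleton_self _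
      have hu2 : (u, !b) ∈ (U \ X) ×ˢ (Finset.univ : Finset Bool) := by
        rw [Finset.mem_product] at hu ⊢; exact ⟨hu.1, Finset.mem_univ _⟩
      rw [← h1, Finset.mem_singleton] at hu2
      simp at hu2
  · intro h
    exact Or.inl ⟨(u, b), mem_prodB.2 h, rfl⟩

lemma tX_inj {U X Y : Finset α} (h : tX U X = tX U Y) : X = Y := by
  have key : ∀ (Z W : Finset α), tX U Z = tX U W → ∀ u, u ∈ Z → u ∈ W := by
    intro Z W hZW u hu
    have h1 : ({(u, true)} : Finset (α × Bool)) ∈ tX U Z := singleton_mem_tX.2 hu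
    rw [hZW] at h1
    exact singleton_mem_tX.1 h1
  ext u; exact ⟨key X Y h u, key Y X h.symm u⟩

lemma cost_node_eq {t : Finset (Finset α)} {c : Finset α → DTree α} {h : α}
    {r : Finset α} (hr : r ∈ t) (hh : h ∈ r) (huniq : ∀ R ∈ t, h ∈ R → R = r) :
    (DTree.node t c).cost h = 1 + (c r).cost h := by
  have hR : ∃ R ∈ t, h ∈ R := ⟨r, hr, hh⟩
  have hch : hR.choose = r := huniq _ hR.choose_spec.1 hR.choose_spec.2
  rw [DTree.cost, dif_pos hR, hch]

lemma cost_node_singleton {U X : Finset α} {c : Finset (α × Bool) → DTree (α × Bool)}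
    {u : α} {b : Bool} (hu : u ∈ X) :
    (DTree.node (tX U X) c).cost (u, b) = 1 + (c {(u, b)}).cost (u, b) := by
  refine cost_node_eq (singleton_mem_tX.2 hu) (Finset.mem_singleton_self _) ?_
  intro R hR hmem
  rcases mem_tX.1 hR with ⟨p, _, rfl⟩ | ⟨rfl, _⟩
  · rw [Finset.mem_singleton] at hmem; rw [hmem]
  · exfalso
    rw [Finset.mem_product] at hmem
    exact (Finset.mem_sdiff.1 hmem.1).2 hu

lemma cost_node_rest {U X : Finset α} {c : Finset (α × Bool) → DTree (α × Bool)}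
    {u : α} {b : Bool} (hu : u ∈ U) (hx : u ∉ X) :
    (DTree.node (tX U X) c).cost (u, b)
      = 1 + (c ((U \ X) ×ˢ (Finset.univ : Finset Bool))).cost (u, b) := by
  have hmem : (u, b) ∈ (U \ X) ×ˢ (Finset.univ : Finset Bool) :=
    mem_prodB.2 (Finset.mem_sdiff.2 ⟨hu, hx⟩)
  refine cost_node_eq (mem_tX.2 (Or.inr ⟨rfl, ⟨_, hmem⟩⟩)) hmem ?_
  intro R hR hm
  rcases mem_tX.1 hR with ⟨p, hp, rfl⟩ | ⟨rfl, _⟩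
  · exfalso
    rw [Finset.mem_singleton] at hm
    subst hm
    exact hx (mem_prodB.1 hp)
  · rfl

end Helpers

section Min
variable {α : Type*} [DecidableEq α]

lemma exists_minimal_rel (S : Finset (Finset α)) (le : Finset α → Finset α → Prop)
    (hrefl : ∀ X ∈ S, le X X)
    (htrans : ∀ X ∈ S, ∀ Y ∈ S, ∀ Z ∈ S, le X Y → le Y Z → le X Z)
    (hanti : ∀ X ∈ S, ∀ Y ∈ S, le X Y → le Y X → X = Y)
    (C : Finset (Finset α)) (hCS : C ⊆ S) (hne : C.Nonempty) :
    ∃ X ∈ C, ∀ Y ∈ C, le Y X → Y = X := by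
  classical
  obtain ⟨X, hX, hmin⟩ := C.exists_min_image
    (fun X => (C.filter (fun Y => le Y X)).card) hne
  refine ⟨X, hX, fun Y hY hle => ?_⟩
  by_contra hne'
  have hsub : C.filter (fun Z => le Z Y) ⊆ C.filter (fun Z => le Z X) := by
    intro Z hZ
    rw [Finset.mem_filter] at hZ ⊢
    exact ⟨hZ.1, htrans _ (hCS hZ.1) _ (hCS hY) _ (hCS hX) hZ.2 hle⟩
  have hXin : X ∈ C.filter (fun Z => le Z X) :=
    Finset.mem_filter.2 ⟨hX, hrefl _ (hCS hX)⟩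
  have hXnotin : X ∉ C.filter (fun Z => le Z Y) := by
    rw [Finset.mem_filter]
    rintro ⟨-, hXY⟩
    exact hne' (hanti _ (hCS hY) _ (hCS hX) hle hXY)
  have : (C.filter (fun Z => le Z Y)).card < (C.filter (fun Z => le Z X)).card :=
    Finset.card_lt_card ⟨hsub, fun hc => hXnotin (hc hXin)⟩
  exact absurd (hmin Y hY) (by omega)
end Min

section Build
variable {α : Type*} [DecidableEq α]

lemma rest_inter {U X W : Finset α} (hWU : W ⊆ U) :
    ((U \ X) ×ˢ (Finset.univ : Finset Bool)) ∩ (W ×ˢ (Finset.univ : Finset Bool))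
      = (W \ X) ×ˢ (Finset.univ : Finset Bool) := by
  rw [prodB_inter]
  congr 1
  ext u
  simp only [Finset.mem_inter, Finset.mem_sdiff]
  exact ⟨fun ⟨⟨_, h2⟩, h3⟩ => ⟨h3, h2⟩, fun ⟨h1, h2⟩ => ⟨⟨hWU h1, h2⟩, h1⟩⟩

lemma rest_not_singleton {U X : Finset α} {u : α} (hu : u ∈ U) (hx : u ∉ X) :
    ¬∃ p, (U \ X) ×ˢ (Finset.univ : Finset Bool) = ({p} : Finset (α × Bool)) := by
  rintro ⟨p, hp⟩
  have h1 : (u, true) ∈ (U \ X) ×ˢ (Finset.univ : Finset Bool) :=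
    mem_prodB.2 (Finset.mem_sdiff.2 ⟨hu, hx⟩)
  have h2 : (u, false) ∈ (U \ X) ×ˢ (Finset.univ : Finset Bool) :=
    mem_prodB.2 (Finset.mem_sdiff.2 ⟨hu, hx⟩)
  rw [hp, Finset.mem_singleton] at h1 h2
  rw [← h2] at h1
  simp at h1

open Classical in
noncomputable def childFun (D' : DTree α) : Finset α → DTree α :=
  fun R => if h1 : ∃ p, R = ({p} : Finset α) then DTree.leaf h1.choose else D'

lemma childFun_singleton (D' : DTree α) (p : α) :
    childFun D' ({p} : Finset α) = DTree.leaf p := by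
  rw [childFun]
  rw [dif_pos ⟨p, rfl⟩]
  congr 1
  exact (Finset.singleton_inj.1 (Exists.choose_spec (⟨p, rfl⟩ :
    ∃ q, ({p} : Finset α) = {q}))).symm

lemma childFun_rest (D' : DTree α) {R : Finset α} (h : ¬∃ p, R = ({p} : Finset α)) :
    childFun D' R = D' := by rw [childFun]; rw [dif_neg h]

lemma leaf_cost (a h : α) : DTree.cost (DTree.leaf a) h = 0 := rfl

lemma build (U : Finset α) (S : Finset (Finset α)) (hsub : ∀ X ∈ S, X ⊆ U)
    (le : Finset α → Finset α → Prop)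
    (hrefl : ∀ X ∈ S, le X X)
    (htrans : ∀ X ∈ S, ∀ Y ∈ S, ∀ Z ∈ S, le X Y → le Y Z → le X Z)
    (hanti : ∀ X ∈ S, ∀ Y ∈ S, le X Y → le Y X → X = Y) :
    ∀ (n : ℕ) (C : Finset (Finset α)), C.card ≤ n → C ⊆ S →
    ∀ (W : Finset α) (P : Finset (Finset (Finset (α × Bool)))),
    W.Nonempty → W ⊆ C.sup id →
    (∀ X ∈ C, ∀ Y ∈ S, le Y X → Y ≠ X → Y ∈ C ∨ tX U Y ∈ P) →
    ∃ D : DTree (α × Bool),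
      PrecValid (S.image (tX U)) (liftLe U S le) P (W ×ˢ (Finset.univ : Finset Bool)) D ∧
      ∀ u ∈ W, ∀ b : Bool, DTree.cost D (u, b) ≤ C.card := by
  intro n
  induction n with
  | zero =>
    intro C hcard _ W P hWne hWcov _
    rw [Nat.le_zero, Finset.card_eq_zero] at hcard
    subst hcard
    simp only [Finset.sup_empty, Finset.bot_eq_empty, Finset.subset_empty] at hWcov
    exact absurd hWcov hWne.ne_empty
  | succ n ih =>
    classical
    intro C hcard hCS W P hWne hWcov hinv
    have hWU : W ⊆ U := by
      intro u hu
      obtain ⟨Z, hZ, huZ⟩ := Finset.mem_sup.1 (hWcov hu)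
      exact hsub Z (hCS hZ) huZ
    obtain ⟨w, hw⟩ := hWne
    obtain ⟨X0, hX0C, -⟩ := Finset.mem_sup.1 (hWcov hw)
    obtain ⟨X, hXC, hXmin⟩ :=
      exists_minimal_rel S le hrefl htrans hanti C hCS ⟨X0, hX0C⟩
    have hCpos : 1 ≤ C.card := Finset.card_pos.2 ⟨X, hXC⟩
    have hcond1 : tX U X ∈ S.image (tX U) := Finset.mem_image_of_mem _ (hCS hXC)
    have hcond2 : ∀ t' ∈ S.image (tX U), liftLe U S le t' (tX U X) → t' ≠ tX U X →
        t' ∈ P := by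
      intro t' _ hle hne'
      obtain ⟨X', hX'S, Y', hY'S, hXt', hYt, hleXY⟩ := hle
      have hYX : Y' = X := tX_inj hYt
      rw [hYX] at hleXY
      have hX'X : X' ≠ X := fun h => hne' (by rw [← hXt', h])
      rcases hinv X hXC X' hX'S hleXY hX'X with hC | hP
      · exact absurd (hXmin X' hC hleXY) hX'X
      · rw [← hXt']; exact hP
    by_cases hW'ne : (W \ X).Nonempty
    · -- recursive case
      have hcard' : (C.erase X).card ≤ n := by
        rw [Finset.card_erase_of_mem hXC]; omega
      have hCS' : C.erase X ⊆ S := fun Z hZ => hCS (Finset.erase_subset _ _ hZ)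
      have hcov' : W \ X ⊆ (C.erase X).sup id := by
        intro u hu
        rw [Finset.mem_sdiff] at hu
        obtain ⟨Z, hZ, huZ⟩ := Finset.mem_sup.1 (hWcov hu.1)
        have hZX : Z ≠ X := fun h => hu.2 (h ▸ huZ)
        exact Finset.mem_sup.2 ⟨Z, Finset.mem_erase.2 ⟨hZX, hZ⟩, huZ⟩
      have hinv' : ∀ Z ∈ C.erase X, ∀ Y ∈ S, le Y Z → Y ≠ Z →
          Y ∈ C.erase X ∨ tX U Y ∈ insert (tX U X) P := by
        intro Z hZ Y hYS hle hne'
        rcases hinv Z (Finset.erase_subset _ _ hZ) Y hYS hle hne' with hC | hP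
        · by_cases hYX : Y = X
          · exact Or.inr (hYX ▸ Finset.mem_insert_self _ _)
          · exact Or.inl (Finset.mem_erase.2 ⟨hYX, hC⟩)
        · exact Or.inr (Finset.mem_insert_of_mem hP)
      obtain ⟨D', hDv, hDc⟩ := ih (C.erase X) hcard' hCS' (W \ X) (insert (tX U X) P)
        hW'ne hcov' hinv'
      refine ⟨DTree.node (tX U X) (childFun D'), ⟨hcond1, hcond2, ?_⟩, ?_⟩
      · -- children valid
        intro R hR hRne
        rcases mem_tX.1 hR with ⟨p, hp, rfl⟩ | ⟨rfl, -⟩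
        · rw [childFun_singleton]
          have hpin : p ∈ W ×ˢ (Finset.univ : Finset Bool) := by
            obtain ⟨q, hq⟩ := hRne
            rw [Finset.mem_inter, Finset.mem_singleton] at hq
            exact hq.1 ▸ hq.2
          show ({p} : Finset (α × Bool)) ∩ (W ×ˢ Finset.univ) = {p}
          rw [Finset.singleton_inter_of_mem hpin]
        · obtain ⟨u, hu⟩ := hW'ne
          rw [Finset.mem_sdiff] at hu
          rw [childFun_rest D' (rest_not_singleton (hWU hu.1) hu.2)]
          rw [rest_inter hWU]
          exact hDv
      · -- cost bound
        intro u hu b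
        by_cases hux : u ∈ X
        · rw [cost_node_singleton hux, childFun_singleton, leaf_cost]
          omega
        · rw [cost_node_rest (hWU hu) hux,
            childFun_rest D' (rest_not_singleton (hWU hu) hux)]
          have := hDc u (Finset.mem_sdiff.2 ⟨hu, hux⟩) b
          rw [Finset.card_erase_of_mem hXC] at this
          omega
    · -- base case: W ⊆ X
      have hWX : ∀ u ∈ W, u ∈ X := by
        intro u hu
        by_contra hx
        exact hW'ne ⟨u, Finset.mem_sdiff.2 ⟨hu, hx⟩⟩
      refine ⟨DTree.node (tX U X) (childFun (DTree.leaf (w, true))),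
        ⟨hcond1, hcond2, ?_⟩, ?_⟩
      · intro R hR hRne
        rcases mem_tX.1 hR with ⟨p, hp, rfl⟩ | ⟨rfl, -⟩
        · rw [childFun_singleton]
          have hpin : p ∈ W ×ˢ (Finset.univ : Finset Bool) := by
            obtain ⟨q, hq⟩ := hRne
            rw [Finset.mem_inter, Finset.mem_singleton] at hq
            exact hq.1 ▸ hq.2
          show ({p} : Finset (α × Bool)) ∩ (W ×ˢ Finset.univ) = {p}
          rw [Finset.singleton_inter_of_mem hpin]
        · exfalso
          rw [rest_inter hWU] at hRne
          obtain ⟨q, hq⟩ := hRne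
          obtain ⟨u', b'⟩ := q
          have := (Finset.mem_sdiff.1 (mem_prodB.1 hq))
          exact this.2 (hWX u' this.1)
      · intro u hu b
        rw [cost_node_singleton (hWX u hu), childFun_singleton, leaf_cost]
        omega
end Build

section Extract
variable {α : Type*} [DecidableEq α]

lemma extract (U : Finset α) (S : Finset (Finset α)) (hsub : ∀ X ∈ S, X ⊆ U)
    (le : Finset α → Finset α → Prop) :
    ∀ (D : DTree (α × Bool)) (W : Finset α) (A : Finset (Finset α)),
    W.Nonempty → W ⊆ U → A ⊆ S → (∀ X ∈ A, ∀ Y ∈ S, le Y X → Y ∈ A) →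
    PrecValid (S.image (tX U)) (liftLe U S le) (A.image (tX U))
      (W ×ˢ (Finset.univ : Finset Bool)) D →
    ∃ C : Finset (Finset α), C ⊆ S ∧ (∀ X ∈ C, ∀ Y ∈ S, le Y X → Y ∈ C) ∧
      W ⊆ C.sup id ∧ A ⊆ C ∧
      ∃ u ∈ W, ∃ b : Bool, C.card ≤ A.card + DTree.cost D (u, b) := by
  intro D
  induction D with
  | leaf h =>
    intro W A hWne hWU _ _ hpv
    exfalso
    have heq : W ×ˢ (Finset.univ : Finset Bool) = {h} := hpv
    have hc := congrArg Finset.card heq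
    rw [Finset.card_product, Finset.card_univ, Fintype.card_bool,
      Finset.card_singleton] at hc
    have := Finset.card_pos.2 hWne
    omega
  | node t c ihc =>
    intro W A hWne hWU hAS hAcl hpv
    obtain ⟨ht, hprec, hchild⟩ := hpv
    obtain ⟨X, hXS, rfl⟩ := Finset.mem_image.1 ht
    have hA'S : insert X A ⊆ S := Finset.insert_subset_iff.2 ⟨hXS, hAS⟩
    have hA'cl : ∀ Z ∈ insert X A, ∀ Y ∈ S, le Y Z → Y ∈ insert X A := by
      intro Z hZ Y hYS hle
      rcases Finset.mem_insert.1 hZ with rfl | hZA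
      · by_cases hYX : Y = Z
        · rw [hYX]; exact Finset.mem_insert_self _ _
        · have hlift : liftLe U S le (tX U Y) (tX U Z) :=
            ⟨Y, hYS, Z, hXS, rfl, rfl, hle⟩
          have hneq : tX U Y ≠ tX U Z := fun h => hYX (tX_inj h)
          have hmem := hprec (tX U Y) (Finset.mem_image_of_mem _ hYS) hlift hneq
          obtain ⟨a, haA, hat⟩ := Finset.mem_image.1 hmem
          exact Finset.mem_insert_of_mem ((tX_inj hat) ▸ haA)
      · exact Finset.mem_insert_of_mem (hAcl Z hZA Y hYS hle)
    have hcardA' : (insert X A).card ≤ A.card + 1 := Finset.card_insert_le _ _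
    by_cases hW' : (W \ X).Nonempty
    · -- recurse into the rest reply
      obtain ⟨u0, hu0⟩ := hW'
      have hu0' := Finset.mem_sdiff.1 hu0
      have hu0U : u0 ∈ U \ X := Finset.mem_sdiff.2 ⟨hWU hu0'.1, hu0'.2⟩
      have hR0mem : (U \ X) ×ˢ (Finset.univ : Finset Bool) ∈ tX U X :=
        mem_tX.2 (Or.inr ⟨rfl, ⟨(u0, true), mem_prodB.2 hu0U⟩⟩)
      have hint : ((U \ X) ×ˢ (Finset.univ : Finset Bool)) ∩
          (W ×ˢ (Finset.univ : Finset Bool))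
            = (W \ X) ×ˢ (Finset.univ : Finset Bool) := rest_inter hWU
      have hne' : (((U \ X) ×ˢ (Finset.univ : Finset Bool)) ∩
          (W ×ˢ (Finset.univ : Finset Bool))).Nonempty := by
        rw [hint]; exact ⟨(u0, true), mem_prodB.2 hu0⟩
      have hchildpv := hchild _ hR0mem hne'
      rw [hint, ← Finset.image_insert] at hchildpv
      obtain ⟨C, hCS, hCcl, hCcov, hAC, u, hu, b, hcost⟩ :=
        ihc _ (W \ X) (insert X A) ⟨u0, hu0⟩ ((Finset.sdiff_subset).trans hWU) hA'S hA'cl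
          hchildpv
      have humem := Finset.mem_sdiff.1 hu
      refine ⟨C, hCS, hCcl, ?_, (Finset.subset_insert _ _).trans hAC, u, humem.1, b, ?_⟩
      · intro v hv
        by_cases hvX : v ∈ X
        · exact Finset.mem_sup.2 ⟨X, hAC (Finset.mem_insert_self _ _), hvX⟩
        · exact hCcov (Finset.mem_sdiff.2 ⟨hv, hvX⟩)
      · rw [cost_node_rest (hWU humem.1) humem.2]
        omega
    · -- W ⊆ X
      obtain ⟨w, hw⟩ := hWne
      have hwX : w ∈ X := by
        by_contra hx
        exact hW' ⟨w, Finset.mem_sdiff.2 ⟨hw, hx⟩⟩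
      refine ⟨insert X A, hA'S, hA'cl, ?_, Finset.subset_insert _ _, w, hw, true, ?_⟩
      · intro v hv
        have hvX : v ∈ X := by
          by_contra hx
          exact hW' ⟨v, Finset.mem_sdiff.2 ⟨hv, hx⟩⟩
        exact Finset.mem_sup.2 ⟨X, Finset.mem_insert_self _ _, hvX⟩
      · rw [cost_node_singleton hwX]
        omega
end Extract

/-- the optimal worst-case cost of a precedence-closed decision tree
for the constructed instance equals the optimal value of Precedence Constrained Set
Cover (with f = 1). -/
theorem stmt17 {α : Type*} [DecidableEq α]
    (U : Finset α) (hU : U.Nonempty)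
    (S : Finset (Finset α)) (hsub : ∀ X ∈ S, X ⊆ U) (hcov : S.sup id = U)
    (le : Finset α → Finset α → Prop)
    (hrefl : ∀ X ∈ S, le X X)
    (htrans : ∀ X ∈ S, ∀ Y ∈ S, ∀ Z ∈ S, le X Y → le Y Z → le X Z)
    (hanti : ∀ X ∈ S, ∀ Y ∈ S, le X Y → le Y X → X = Y) :
    sInf {c : ℕ | ∃ D : DTree (α × Bool),
        PrecValid (S.image (tX U)) (liftLe U S le) ∅
          (U ×ˢ (Finset.univ : Finset Bool)) D ∧
        costW (U ×ˢ (Finset.univ : Finset Bool)) D = c} =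
      sInf {c : ℕ | ∃ C : Finset (Finset α), C ⊆ S ∧
        (∀ X ∈ C, ∀ Y ∈ S, le Y X → Y ∈ C) ∧ C.sup id = U ∧ C.card = c} := by
  classical
  have buildFor : ∀ C : Finset (Finset α), C ⊆ S →
      (∀ X ∈ C, ∀ Y ∈ S, le Y X → Y ∈ C) → C.sup id = U →
      ∃ D : DTree (α × Bool),
        PrecValid (S.image (tX U)) (liftLe U S le) ∅
          (U ×ˢ (Finset.univ : Finset Bool)) D ∧
        costW (U ×ˢ (Finset.univ : Finset Bool)) D ≤ C.card := by
    intro C hCS hCcl hCcov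
    obtain ⟨D, hDv, hDc⟩ := build U S hsub le hrefl htrans hanti C.card C le_rfl hCS
      U ∅ hU (hCcov ▸ subset_rfl) (fun X hX Y hY hle _ => Or.inl (hCcl X hX Y hY hle))
    refine ⟨D, hDv, ?_⟩
    apply Finset.sup_le
    rintro ⟨u, b⟩ hh
    exact hDc u (mem_prodB.1 hh) b
  have hBne : {c : ℕ | ∃ C : Finset (Finset α), C ⊆ S ∧
      (∀ X ∈ C, ∀ Y ∈ S, le Y X → Y ∈ C) ∧ C.sup id = U ∧ C.card = c}.Nonempty :=
    ⟨S.card, S, subset_rfl, fun _ _ Y hY _ => hY, hcov, rfl⟩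
  have hAne : {c : ℕ | ∃ D : DTree (α × Bool),
      PrecValid (S.image (tX U)) (liftLe U S le) ∅
        (U ×ˢ (Finset.univ : Finset Bool)) D ∧
      costW (U ×ˢ (Finset.univ : Finset Bool)) D = c}.Nonempty := by
    obtain ⟨D, hDv, -⟩ := buildFor S subset_rfl (fun _ _ Y hY _ => hY) hcov
    exact ⟨costW (U ×ˢ (Finset.univ : Finset Bool)) D, D, hDv, rfl⟩
  apply le_antisymm
  · obtain ⟨C, hCS, hCcl, hCcov, hCcard⟩ := Nat.sInf_mem hBne
    obtain ⟨D, hDv, hDc⟩ := buildFor C hCS hCcl hCcov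
    exact le_trans (Nat.sInf_le ⟨D, hDv, rfl⟩) (hDc.trans_eq hCcard)
  · obtain ⟨D, hDv, hDcw⟩ := Nat.sInf_mem hAne
    have hDv' : PrecValid (S.image (tX U)) (liftLe U S le)
        ((∅ : Finset (Finset α)).image (tX U))
        (U ×ˢ (Finset.univ : Finset Bool)) D := by
      rwa [Finset.image_empty]
    obtain ⟨C, hCS, hCcl, hCcov, -, u, hu, b, hcost⟩ :=
      extract U S hsub le D U ∅ hU subset_rfl (Finset.empty_subset _)
        (by simp) hDv'
    have hsup : C.sup id = U :=
      le_antisymm (Finset.sup_le fun X hX => hsub X (hCS hX)) hCcov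
    have hle2 : DTree.cost D (u, b) ≤ costW (U ×ˢ (Finset.univ : Finset Bool)) D :=
      Finset.le_sup (mem_prodB.2 hu)
    rw [Finset.card_empty] at hcost
    exact le_trans (Nat.sInf_le ⟨C, hCS, hCcl, hsup, rfl⟩) (by omega)
end
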